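/- arXiv:2204.03469 — 2 statements merged into one kernel-verified Lean document; each statement's English description precedes it below -/
import Mathlib

section
/- Let S ⊆ {-1,+1}^N with |S| ≥ exp(N·δ), let μ be uniform on S, and suppose ε ∈ (0,1) satisfies ψ₂(ε) ≤ δ/2 (with ψ₂ as in the binary entropy notation). Let n be a positive integer with n ≤ exp(N·δ/4)/2. Then under μ^⊗n, the probability that (σ⁽¹⁾,…,σ⁽ⁿ⁾) are pairwise (1-ε)-separated, i.e. ⟨σ⁽ⁱ⁾,σ⁽ʲ⁾⟩/N ≤ 1-ε for all i ≠ j, is at least 3/4. -/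
/-- The ±1 value attached to a Boolean coordinate. -/
def sgn (b : Bool) : ℝ := if b then 1 else -1

/-- Scalar product of two points of the hypercube `{-1,+1}^N` (encoded by Booleans). -/
noncomputable def ip {N : ℕ} (σ τ : Fin N → Bool) : ℝ := ∑ i, sgn (σ i) * sgn (τ i)

/-- Binary relative entropy `k₂(t) = H((1+t)/2 | 1/2)`. -/
noncomputable def k₂ (t : ℝ) : ℝ :=
  (1 + t) / 2 * Real.log (1 + t) + (1 - t) / 2 * Real.log (1 - t)

/-- `ψ₂(ε) = log 2 - k₂(1-ε)`. -/
noncomputable def ψ₂ (ε : ℝ) : ℝ := Real.log 2 - k₂ (1 - ε)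

/-!
Chernoff's bound with the tilt `artanh (1 - ε)` shows that for a fixed `σ` at most
`exp (N ψ₂(ε)) ≤ exp (Nδ/2)` points `τ` of the cube satisfy `⟨σ, τ⟩/N > 1 - ε`. Once all
coordinates of a tuple but the `j`-th are fixed, `x j` must lie in this neighbourhood of `x i`,
so each ordered pair `i ≠ j` is bad for at most a fraction `exp (Nδ/2)/|S| ≤ exp (-Nδ/2)` of
`Sⁿ`. A union bound over the `n(n-1) ≤ exp (Nδ/2)/4` pairs leaves a bad fraction of at most `1/4`.
-/

open Finset Real

theorem two_mul_cosh_artanh_div_exp {s : ℝ} (hs : s ∈ Set.Ioo (-1) 1) :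
    2 * cosh (artanh s) / exp (artanh s * s) = exp (log 2 - k₂ s) := by
  have h1 : 0 < 1 + s := by linarith [hs.1]
  have h2 : 0 < 1 - s := by linarith [hs.2]
  set x := log (1 + s) / 2
  set y := log (1 - s) / 2
  have hart : artanh s = x - y := by
    rw [artanh_eq_half_log (Set.Ioo_subset_Icc_self hs), log_div h1.ne' h2.ne']
    ring
  have hx : exp (2 * x) = 1 + s := by rw [show 2 * x = log (1 + s) by ring, exp_log h1]
  have hy : exp (2 * y) = 1 - s := by rw [show 2 * y = log (1 - s) by ring, exp_log h2]
  have hcosh : 2 * cosh (x - y) = 2 * exp (-(x + y)) :=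
    calc 2 * cosh (x - y) = exp (-(x + y)) * (exp (2 * x) + exp (2 * y)) := by
          rw [cosh_eq, mul_add, ← exp_add, ← exp_add]; ring_nf
      _ = 2 * exp (-(x + y)) := by rw [hx, hy]; ring
  calc 2 * cosh (artanh s) / exp (artanh s * s)
      = exp (log 2 + -(x + y) - (x - y) * s) := by
        rw [hart, hcosh, exp_sub, exp_add, exp_log two_pos]
    _ = exp (log 2 - k₂ s) := by congr 1; unfold k₂ x y; ring

section Hypercube

variable {N : ℕ}

theorem sum_exp_mul_ip (σ : Fin N → Bool) (L : ℝ) :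
    ∑ τ, exp (L * ip σ τ) = (2 * cosh L) ^ N := by
  have hcoord : ∀ a : Bool, ∑ b : Bool, exp (L * (sgn a * sgn b)) = 2 * cosh L := by
    intro a
    cases a <;> simp [sgn, cosh_eq] <;> ring
  calc ∑ τ, exp (L * ip σ τ) = ∑ τ : Fin N → Bool, ∏ i, exp (L * (sgn (σ i) * sgn (τ i))) := by
        simp only [ip, mul_sum, exp_sum]
    _ = ∏ i : Fin N, ∑ b : Bool, exp (L * (sgn (σ i) * sgn b)) :=
        (Fintype.prod_sum fun i b => exp (L * (sgn (σ i) * sgn b))).symm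
    _ = (2 * cosh L) ^ N := by simp only [hcoord, prod_const, card_univ, Fintype.card_fin]

theorem card_filter_le_ip_le (σ : Fin N → Bool) {L : ℝ} (hL : 0 ≤ L) (t : ℝ) :
    (#{τ | t ≤ ip σ τ} : ℝ) ≤ (2 * cosh L) ^ N / exp (L * t) := by
  calc (#{τ | t ≤ ip σ τ} : ℝ) = ∑ τ ∈ {τ | t ≤ ip σ τ}, 1 := by simp
    _ ≤ ∑ τ ∈ {τ | t ≤ ip σ τ}, exp (L * ip σ τ - L * t) :=
        sum_le_sum fun τ hτ => one_le_exp <| sub_nonneg.2 <|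
          mul_le_mul_of_nonneg_left (mem_filter.1 hτ).2 hL
    _ ≤ ∑ τ, exp (L * ip σ τ - L * t) :=
        sum_le_sum_of_subset_of_nonneg (filter_subset _ _) fun _ _ _ => (exp_pos _).le
    _ = (2 * cosh L) ^ N / exp (L * t) := by
        simp only [exp_sub, ← sum_div, sum_exp_mul_ip]

theorem card_filter_lt_ip_div_le_exp_ψ₂ (σ : Fin N → Bool) {ε : ℝ} (hε0 : 0 < ε)
    (hε1 : ε ≤ 1) : (#{τ | 1 - ε < ip σ τ / N} : ℝ) ≤ exp (N * ψ₂ ε) := by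
  have hs : 1 - ε ∈ Set.Ioo (-1) 1 := ⟨by linarith, by linarith⟩
  have hnear : ∀ τ, 1 - ε < ip σ τ / N → (1 - ε) * N ≤ ip σ τ := by
    intro τ hτ
    rcases Nat.eq_zero_or_pos N with hN | hN
    · simp only [hN, Nat.cast_zero, div_zero] at hτ
      linarith
    · exact ((lt_div_iff₀ (by exact_mod_cast hN)).1 hτ).le
  calc (#{τ | 1 - ε < ip σ τ / N} : ℝ) ≤ #{τ | (1 - ε) * N ≤ ip σ τ} := by
        exact_mod_cast card_le_card (monotone_filter_right _ fun τ _ => hnear τ)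
    _ ≤ (2 * cosh (artanh (1 - ε))) ^ N / exp (artanh (1 - ε) * ((1 - ε) * N)) :=
        card_filter_le_ip_le σ (artanh_nonneg (by linarith)) _
    _ = (2 * cosh (artanh (1 - ε)) / exp (artanh (1 - ε) * (1 - ε))) ^ N := by
        rw [div_pow, ← exp_nat_mul]; ring_nf
    _ = exp (N * ψ₂ ε) := by rw [two_mul_cosh_artanh_div_exp hs, ← exp_nat_mul, ψ₂]

end Hypercube

section Tuples

variable {ι α : Type*} [Fintype ι] [DecidableEq ι] [DecidableEq α]

theorem card_piFinset_filter_rel_le (S : Finset α) (R : α → α → Prop) [DecidableRel R] {B : ℝ}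
    (hB : ∀ a, (#{b ∈ S | R a b} : ℝ) ≤ B) {i j : ι} (hij : i ≠ j) :
    (#{x ∈ Fintype.piFinset fun _ => S | R (x i) (x j)} : ℝ) ≤
      #S ^ (Fintype.card ι - 1) * B := by
  set T : Finset (ι → α) := {x ∈ Fintype.piFinset fun _ => S | R (x i) (x j)}
  set restrict : (ι → α) → ({k // k ≠ j} → α) := fun x k => x k
  have hmaps : Set.MapsTo restrict T (Fintype.piFinset fun _ : {k // k ≠ j} => S) :=
    fun x hx => Fintype.mem_piFinset.2 fun k => Fintype.mem_piFinset.1 (mem_filter.1 hx).1 k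
  have hfiber : ∀ y, #{x ∈ T | restrict x = y} ≤ #{b ∈ S | R (y ⟨i, hij⟩) b} := by
    intro y
    refine card_le_card_of_injOn (fun x => x j) ?_ ?_
    · intro x hx
      simp only [T, coe_filter, mem_filter, Fintype.mem_piFinset, Set.mem_ofPred_eq] at hx ⊢
      rw [← hx.2]
      exact ⟨hx.1.1 j, hx.1.2⟩
    · intro x hx x' hx' hxx'
      simp only [coe_filter, Set.mem_ofPred_eq] at hx hx'
      funext k
      by_cases hk : k = j
      · subst hk; exact hxx'
      · exact congrFun (hx.2.trans hx'.2.symm) ⟨k, hk⟩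
  rw [card_eq_sum_card_fiberwise hmaps, Nat.cast_sum]
  calc ∑ y ∈ Fintype.piFinset (fun _ => S), (#{x ∈ T | restrict x = y} : ℝ)
      ≤ ∑ _y ∈ Fintype.piFinset (fun _ : {k // k ≠ j} => S), B :=
        sum_le_sum fun y _ => (Nat.cast_le.2 (hfiber y)).trans (hB _)
    _ = #S ^ (Fintype.card ι - 1) * B := by
        simp [Fintype.card_piFinset, Fintype.card_subtype_compl]

theorem card_piFinset_filter_exists_rel_le (S : Finset α) (R : α → α → Prop) [DecidableRel R]
    {B : ℝ} (hB : ∀ a, (#{b ∈ S | R a b} : ℝ) ≤ B) :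
    (#{x ∈ Fintype.piFinset fun _ : ι => S | ∃ i j, i ≠ j ∧ R (x i) (x j)} : ℝ) ≤
      (Fintype.card ι * (Fintype.card ι - 1) : ℕ) * (#S ^ (Fintype.card ι - 1) * B) := by
  set P : Finset (ι → α) := Fintype.piFinset fun _ => S
  have hunion : {x ∈ P | ∃ i j, i ≠ j ∧ R (x i) (x j)} ⊆
      (univ : Finset ι).offDiag.biUnion fun p => {x ∈ P | R (x p.1) (x p.2)} := by
    intro x hx
    obtain ⟨hxP, i, j, hij, hR⟩ := mem_filter.1 hx
    exact mem_biUnion.2 ⟨(i, j), by simpa using hij, mem_filter.2 ⟨hxP, hR⟩⟩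
  calc (#{x ∈ P | ∃ i j, i ≠ j ∧ R (x i) (x j)} : ℝ)
      ≤ ∑ p ∈ (univ : Finset ι).offDiag, (#{x ∈ P | R (x p.1) (x p.2)} : ℝ) := by
        exact_mod_cast (card_le_card hunion).trans card_biUnion_le
    _ ≤ ∑ _p ∈ (univ : Finset ι).offDiag, (#S ^ (Fintype.card ι - 1) * B) :=
        sum_le_sum fun p hp => card_piFinset_filter_rel_le S R hB (mem_offDiag.1 hp).2.2
    _ = _ := by rw [sum_const, nsmul_eq_mul, offDiag_card, card_univ, Nat.mul_sub_one]

theorem one_sub_le_card_piFinset_filter_pairwise_div {S : Finset α} (hS : S.Nonempty)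
    (R : α → α → Prop) [DecidableRel R] {B : ℝ} (hB : ∀ a, (#{b ∈ S | R a b} : ℝ) ≤ B) :
    1 - (Fintype.card ι * (Fintype.card ι - 1) : ℕ) * B / #S ≤
      #{x ∈ Fintype.piFinset fun _ : ι => S | ∀ i j, i ≠ j → ¬ R (x i) (x j)} /
        (#S : ℝ) ^ Fintype.card ι := by
  set P : Finset (ι → α) := Fintype.piFinset fun _ => S
  set n := Fintype.card ι
  have hS0 : (0 : ℝ) < #S := by exact_mod_cast hS.card_pos
  have hsplit : (#{x ∈ P | ∀ i j, i ≠ j → ¬ R (x i) (x j)} : ℝ) =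
      #S ^ n - #{x ∈ P | ∃ i j, i ≠ j ∧ R (x i) (x j)} := by
    have hP : (#P : ℝ) = #S ^ n := by simp [P, n]
    have := card_filter_add_card_filter_not (s := P) (fun x => ∃ i j, i ≠ j ∧ R (x i) (x j))
    simp only [not_exists, not_and] at this
    rw [← hP, eq_sub_iff_add_eq, add_comm]
    exact_mod_cast this
  have hpow : ((n * (n - 1) : ℕ) : ℝ) * (#S ^ (n - 1) * B) =
      (n * (n - 1) : ℕ) * B / #S * #S ^ n := by
    rcases Nat.eq_zero_or_pos n with hn | hn
    · simp [hn]
    · rw [← pow_sub_one_mul hn.ne']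
      field_simp
  rw [le_div_iff₀ (by positivity), hsplit]
  linarith [card_piFinset_filter_exists_rel_le (ι := ι) S R hB]

end Tuples

theorem natCast_mul_pred_mul_exp_le {n : ℕ} {a : ℝ} (hn : (n : ℝ) ≤ exp (a / 4) / 2) :
    ((n * (n - 1) : ℕ) : ℝ) * exp (a / 2) ≤ exp a / 4 := by
  have hn_sq : ((n * (n - 1) : ℕ) : ℝ) ≤ exp (a / 2) / 4 :=
    calc ((n * (n - 1) : ℕ) : ℝ) ≤ (n : ℝ) ^ 2 := by
          exact_mod_cast (Nat.mul_le_mul_left n (n.sub_le 1)).trans_eq (sq n).symm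
      _ ≤ (exp (a / 4) / 2) ^ 2 := by gcongr
      _ = exp (a / 2) / 4 := by rw [div_pow, ← exp_nat_mul]; ring_nf
  calc ((n * (n - 1) : ℕ) : ℝ) * exp (a / 2) ≤ exp (a / 2) / 4 * exp (a / 2) := by gcongr
    _ = exp a / 4 := by rw [div_mul_eq_mul_div, ← exp_add]; ring_nf

theorem tuples_pairwise_separated_general (N : ℕ) (δ : ℝ)
    (S : Finset (Fin N → Bool)) (hS : Real.exp (N * δ) ≤ (S.card : ℝ))
    (ε : ℝ) (hε0 : 0 < ε) (hε1 : ε < 1) (hεδ : ψ₂ ε ≤ δ / 2)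
    (n : ℕ) (hn2 : (n : ℝ) ≤ Real.exp (N * δ / 4) / 2) :
    (3 : ℝ) / 4 ≤
      ((Finset.univ.filter (fun x : Fin n → (Fin N → Bool) =>
          (∀ i, x i ∈ S) ∧
          ∀ i j, i ≠ j → ip (x i) (x j) / (N : ℝ) ≤ 1 - ε)).card : ℝ)
        / (S.card : ℝ) ^ n := by
  set R : (Fin N → Bool) → (Fin N → Bool) → Prop := fun σ τ => 1 - ε < ip σ τ / N
  have hB : ∀ σ, (#{τ ∈ S | R σ τ} : ℝ) ≤ exp (N * δ / 2) := fun σ =>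
    calc (#{τ ∈ S | R σ τ} : ℝ) ≤ #{τ | R σ τ} := by
          exact_mod_cast card_le_card (filter_subset_filter _ (subset_univ S))
      _ ≤ exp (N * ψ₂ ε) := card_filter_lt_ip_div_le_exp_ψ₂ σ hε0 hε1.le
      _ ≤ exp (N * δ / 2) := by rw [mul_div_assoc]; gcongr
  have hSpos : (0 : ℝ) < #S := (exp_pos _).trans_le hS
  have hprob := one_sub_le_card_piFinset_filter_pairwise_div (ι := Fin n)
    (card_pos.1 (by exact_mod_cast hSpos)) R hB
  rw [Fintype.card_fin] at hprob
  have hsmall : ((n * (n - 1) : ℕ) : ℝ) * exp (N * δ / 2) / #S ≤ 1 / 4 := by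
    rw [div_le_iff₀ hSpos]
    linarith [natCast_mul_pred_mul_exp_le (a := N * δ) hn2]
  calc (3 : ℝ) / 4 ≤ 1 - ((n * (n - 1) : ℕ) : ℝ) * exp (N * δ / 2) / #S := by linarith
    _ ≤ _ := hprob
    _ = _ := by
      congr 3
      ext x
      simp [R]

/-- Under `μ^⊗n` (uniform on `Sⁿ`), an `n`-tuple is pairwise `(1-ε)`-separated with
probability at least `3/4`, provided `|S| ≥ exp(Nδ)`, `ψ₂(ε) ≤ δ/2` and
`1 ≤ n ≤ exp(Nδ/4)/2`. -/
theorem tuples_pairwise_separated (N : ℕ) (δ : ℝ) (hδ : 0 < δ)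
    (S : Finset (Fin N → Bool)) (hS : Real.exp (N * δ) ≤ (S.card : ℝ))
    (ε : ℝ) (hε0 : 0 < ε) (hε1 : ε < 1) (hεδ : ψ₂ ε ≤ δ / 2)
    (n : ℕ) (hn1 : 1 ≤ n) (hn2 : (n : ℝ) ≤ Real.exp (N * δ / 4) / 2) :
    (3 : ℝ) / 4 ≤
      ((Finset.univ.filter (fun x : Fin n → (Fin N → Bool) =>
          (∀ i, x i ∈ S) ∧
          ∀ i j, i ≠ j → ip (x i) (x j) / (N : ℝ) ≤ 1 - ε)).card : ℝ)
        / (S.card : ℝ) ^ n :=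
  tuples_pairwise_separated_general N δ S hS ε hε0 hε1 hεδ n hn2
end

section
/- Let F : ℝ^p → ℝ be bounded with all partial derivatives up to third order bounded by C_F. Let g be a standard Gaussian vector in ℝ^N, ξ a random vector in ℝ^N with i.i.d. coordinates of mean zero, unit variance, and finite third moment, and Σ ∈ {-1,+1}^{p×N}. Then |E[F(Σξ/N^{1/2})] - E[F(Σg/N^{1/2})]| ≤ (p·C_F/N^{1/2})·(E|ξ₁|³ + E|g₁|³). -/
/-!
Replace the coordinates of `ξ` by Gaussian ones one at a time. With the other coordinates
frozen, one swap only changes the law of `t` in `t ↦ F (c + t • w)`, where `w` is a column of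
`Σ / √N`, so `‖w‖ ≤ N^{-1/2}` in the sup norm. By Taylor's formula this function is a quadratic
polynomial in `t` up to an error `C_F ‖w‖³ |t|³ / 2`, and the polynomial has the same expectation
under both laws because their first two moments agree. The `N` swaps cost
`N · C_F N^{-3/2} (E|ξ₁|³ + E|g₁|³)`.
-/

open MeasureTheory ProbabilityTheory Finset
open scoped ENNReal

section Taylor

variable {E G : Type*} [NormedAddCommGroup E] [NormedSpace ℝ E]
  [NormedAddCommGroup G] [NormedSpace ℝ G] [CompleteSpace G]

open Nat in
theorem norm_sub_sum_iteratedFDeriv_le {f : E → G} {n : ℕ} (hf : ContDiff ℝ (n + 1) f) {C : ℝ}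
    (hC : ∀ z, ‖iteratedFDeriv ℝ (n + 1) f z‖ ≤ C) (x y : E) :
    ‖f (x + y) - ∑ k ∈ range (n + 1), (k ! : ℝ)⁻¹ • iteratedFDeriv ℝ k f x (fun _ ↦ y)‖
      ≤ C * ‖y‖ ^ (n + 1) / n ! := by
  rw [map_add_eq_sum_add_integral_iteratedFDeriv fun t _ ↦ hf.contDiffAt, add_sub_cancel_left,
    norm_smul, norm_inv, RCLike.norm_natCast, inv_mul_eq_div]
  gcongr
  have hbound : ∀ t ∈ Set.uIoc (0 : ℝ) 1,
      ‖(1 - t) ^ n • iteratedFDeriv ℝ (n + 1) f (x + t • y) (fun _ ↦ y)‖ ≤ C * ‖y‖ ^ (n + 1) := by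
    intro t ht
    obtain ⟨ht0, ht1⟩ : 0 < t ∧ t ≤ 1 := by simpa using ht
    calc ‖(1 - t) ^ n • iteratedFDeriv ℝ (n + 1) f (x + t • y) (fun _ ↦ y)‖
        ≤ 1 * (C * ∏ _ : Fin (n + 1), ‖y‖) := by
          rw [norm_smul]
          gcongr
          · rw [norm_pow, Real.norm_eq_abs, abs_of_nonneg (by linarith)]
            exact pow_le_one₀ (by linarith) (by linarith)
          · exact ((iteratedFDeriv ℝ (n + 1) f _).le_opNorm _).trans (by gcongr; exact hC _)
      _ = C * ‖y‖ ^ (n + 1) := by simp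
  simpa using intervalIntegral.norm_integral_le_of_norm_le_const hbound

theorem abs_comp_add_smul_sub_taylor_le {F : E → ℝ} (hF : ContDiff ℝ 3 F) {C : ℝ}
    (hC : ∀ z, ‖iteratedFDeriv ℝ 3 F z‖ ≤ C) (c w : E) (t : ℝ) :
    |F (c + t • w) - (F c + iteratedFDeriv ℝ 1 F c (fun _ ↦ w) * t
        + iteratedFDeriv ℝ 2 F c (fun _ ↦ w) / 2 * t ^ 2)| ≤ C * ‖w‖ ^ 3 / 2 * |t| ^ 3 := by
  have h := norm_sub_sum_iteratedFDeriv_le (n := 2) hF hC c (t • w)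
  simp only [sum_range_succ, range_zero, sum_empty, ContinuousMultilinearMap.map_smul_univ,
    prod_const, card_univ, Fintype.card_fin, norm_smul, Real.norm_eq_abs] at h
  convert h using 2
  · simp only [iteratedFDeriv_zero_apply, iteratedFDeriv_one_apply, Nat.factorial_zero,
      Nat.factorial_one, Nat.factorial_two, Nat.cast_one, Nat.cast_ofNat, inv_one, pow_zero,
      pow_one, smul_eq_mul, one_mul, zero_add, sub_right_inj]
    ring
  · simp only [mul_pow, Nat.factorial_two]
    push_cast
    ring

end Taylor

structure HasStandardMoments (μ : Measure ℝ) : Prop where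
  integral_id : ∫ x, x ∂μ = 0
  integral_sq : ∫ x, x ^ 2 ∂μ = 1
  integrable_abs_pow_three : Integrable (fun x ↦ |x| ^ 3) μ

namespace HasStandardMoments

variable {μ ν : Measure ℝ}

theorem memLp_three (hμ : HasStandardMoments μ) : MemLp id 3 μ := by
  refine (integrable_norm_rpow_iff aestronglyMeasurable_id (by norm_num) (by norm_num)).1 ?_
  refine hμ.integrable_abs_pow_three.congr (ae_of_all _ fun x ↦ ?_)
  simp only [id, Real.norm_eq_abs]
  rw [show (3 : ℝ≥0∞).toReal = (3 : ℕ) by norm_num, Real.rpow_natCast]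

variable [IsProbabilityMeasure μ] [IsProbabilityMeasure ν]

theorem integrable_id (hμ : HasStandardMoments μ) : Integrable (fun x ↦ x) μ :=
  (hμ.memLp_three.mono_exponent (by norm_num)).integrable le_rfl

theorem integrable_sq (hμ : HasStandardMoments μ) : Integrable (fun x ↦ x ^ 2) μ :=
  (hμ.memLp_three.mono_exponent (by norm_num)).integrable_sq

theorem integrable_quadratic (hμ : HasStandardMoments μ) (a b c : ℝ) :
    Integrable (fun x ↦ a + b * x + c * x ^ 2) μ :=
  ((integrable_const a).fun_add (hμ.integrable_id.const_mul b)).fun_add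
    (hμ.integrable_sq.const_mul c)

theorem integral_quadratic (hμ : HasStandardMoments μ) (a b c : ℝ) :
    ∫ x, a + b * x + c * x ^ 2 ∂μ = a + c := by
  rw [integral_add ((integrable_const a).fun_add (hμ.integrable_id.const_mul b))
      (hμ.integrable_sq.const_mul c),
    integral_add (integrable_const a) (hμ.integrable_id.const_mul b), integral_const_mul,
    integral_const_mul, hμ.integral_id, hμ.integral_sq]
  simp

theorem abs_integral_sub_le_of_abs_sub_quadratic_le (hμ : HasStandardMoments μ) {f : ℝ → ℝ}
    (hf : Continuous f) {a b c K : ℝ} (hfK : ∀ x, |f x - (a + b * x + c * x ^ 2)| ≤ K * |x| ^ 3) :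
    |∫ x, f x ∂μ - (a + c)| ≤ K * ∫ x, |x| ^ 3 ∂μ := by
  have hq := hμ.integrable_quadratic a b c
  have hr : Integrable (fun x ↦ f x - (a + b * x + c * x ^ 2)) μ :=
    (hμ.integrable_abs_pow_three.const_mul K).mono' (by fun_prop) (ae_of_all _ hfK)
  rw [← hμ.integral_quadratic a b c, ← integral_sub (by simpa using hr.fun_add hq) hq,
    ← integral_const_mul]
  exact norm_integral_le_of_norm_le (f := fun x ↦ f x - (a + b * x + c * x ^ 2))
    (hμ.integrable_abs_pow_three.const_mul K) (ae_of_all _ hfK)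

theorem abs_integral_sub_integral_le_of_abs_sub_quadratic_le (hμ : HasStandardMoments μ)
    (hν : HasStandardMoments ν) {f : ℝ → ℝ} (hf : Continuous f) {a b c K : ℝ}
    (hfK : ∀ x, |f x - (a + b * x + c * x ^ 2)| ≤ K * |x| ^ 3) :
    |∫ x, f x ∂μ - ∫ x, f x ∂ν| ≤ K * ((∫ x, |x| ^ 3 ∂μ) + ∫ x, |x| ^ 3 ∂ν) := by
  have hμK := hμ.abs_integral_sub_le_of_abs_sub_quadratic_le hf hfK
  have hνK := hν.abs_integral_sub_le_of_abs_sub_quadratic_le hf hfK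
  calc |∫ x, f x ∂μ - ∫ x, f x ∂ν|
      ≤ |∫ x, f x ∂μ - (a + c)| + |(a + c) - ∫ x, f x ∂ν| := abs_sub_le _ _ _
    _ ≤ _ := by rw [abs_sub_comm (a + c), mul_add]; exact add_le_add hμK hνK

end HasStandardMoments

theorem hasStandardMoments_gaussianReal : HasStandardMoments (gaussianReal 0 1) where
  integral_id := integral_id_gaussianReal
  integral_sq := by
    rw [← variance_of_integral_eq_zero (X := fun x ↦ x) aemeasurable_id' integral_id_gaussianReal]
    simp
  integrable_abs_pow_three := by
    simpa using (memLp_id_gaussianReal 3).integrable_norm_pow (p := 3) (by norm_num)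

theorem integral_pi_fin_succ {α : Type*} [MeasurableSpace α] (μ : Measure α) [SigmaFinite μ]
    {n : ℕ} (g : (Fin (n + 1) → α) → ℝ) :
    ∫ x, g x ∂(Measure.pi fun _ ↦ μ)
      = ∫ z, g (Fin.cons z.1 z.2) ∂(μ.prod (Measure.pi fun _ : Fin n ↦ μ)) := by
  rw [← (measurePreserving_piFinSuccAbove (fun _ ↦ μ) 0).symm.integral_comp']
  simp [MeasurableEquiv.piFinSuccAbove_symm_apply, Fin.insertNthEquiv, Fin.insertNth_zero']

theorem abs_integral_sub_integral_le_of_forall_abs_sub_le {α : Type*} [MeasurableSpace α]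
    {ρ : Measure α} [IsProbabilityMeasure ρ] {f g : α → ℝ} (hf : Integrable f ρ)
    (hg : Integrable g ρ) {K : ℝ} (h : ∀ x, |f x - g x| ≤ K) :
    |∫ x, f x ∂ρ - ∫ x, g x ∂ρ| ≤ K := by
  rw [← integral_sub hf hg]
  simpa using norm_integral_le_of_norm_le_const (μ := ρ) (f := fun x ↦ f x - g x) (ae_of_all _ h)

section Lindeberg

variable {E : Type*} [NormedAddCommGroup E] [NormedSpace ℝ E] {F : E → ℝ} {B C : ℝ}
  {μ ν : Measure ℝ} [IsProbabilityMeasure μ] [IsProbabilityMeasure ν]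

theorem abs_integral_comp_add_smul_sub_integral_le (hF : ContDiff ℝ 3 F)
    (hC : ∀ z, ‖iteratedFDeriv ℝ 3 F z‖ ≤ C) (hμ : HasStandardMoments μ)
    (hν : HasStandardMoments ν) (c w : E) :
    |∫ t, F (c + t • w) ∂μ - ∫ t, F (c + t • w) ∂ν|
      ≤ C * ‖w‖ ^ 3 / 2 * ((∫ x, |x| ^ 3 ∂μ) + ∫ x, |x| ^ 3 ∂ν) :=
  hμ.abs_integral_sub_integral_le_of_abs_sub_quadratic_le hν (by fun_prop)
    (abs_comp_add_smul_sub_taylor_le hF hC c w)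

theorem abs_integral_pi_sub_integral_pi_le (hF : ContDiff ℝ 3 F) (hFB : ∀ x, |F x| ≤ B)
    (hC : ∀ z, ‖iteratedFDeriv ℝ 3 F z‖ ≤ C) (hμ : HasStandardMoments μ)
    (hν : HasStandardMoments ν) {n : ℕ} (c : E) (w : Fin n → E) :
    |∫ x, F (c + ∑ i, x i • w i) ∂(Measure.pi fun _ ↦ μ)
        - ∫ x, F (c + ∑ i, x i • w i) ∂(Measure.pi fun _ ↦ ν)|
      ≤ ∑ i, C * ‖w i‖ ^ 3 / 2 * ((∫ x, |x| ^ 3 ∂μ) + ∫ x, |x| ^ 3 ∂ν) := by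
  induction n generalizing c with
  | zero => simp
  | succ n ih =>
    set G : ℝ × (Fin n → ℝ) → ℝ := fun z ↦ F (c + z.1 • w 0 + ∑ i, z.2 i • w i.succ)
    have hG : ∀ (ρ : Measure ℝ) [IsProbabilityMeasure ρ],
        ∫ x, F (c + ∑ i, x i • w i) ∂(Measure.pi fun _ ↦ ρ)
          = ∫ z, G z ∂(ρ.prod (Measure.pi fun _ ↦ ρ)) := by
      intro ρ _
      simp [integral_pi_fin_succ, Fin.sum_univ_succ, G, add_assoc]
    have hGint : ∀ (ρ : Measure ℝ) (σ : Measure (Fin n → ℝ)) [IsProbabilityMeasure ρ]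
        [IsProbabilityMeasure σ], Integrable G (ρ.prod σ) :=
      fun ρ σ _ _ ↦ .of_bound (by fun_prop) B (ae_of_all _ fun z ↦ hFB _)
    have hfirst : |∫ z, G z ∂(μ.prod (Measure.pi fun _ ↦ μ))
        - ∫ z, G z ∂(ν.prod (Measure.pi fun _ ↦ μ))|
          ≤ C * ‖w 0‖ ^ 3 / 2 * ((∫ x, |x| ^ 3 ∂μ) + ∫ x, |x| ^ 3 ∂ν) := by
      rw [integral_prod_symm _ (hGint _ _), integral_prod_symm _ (hGint _ _)]
      refine abs_integral_sub_integral_le_of_forall_abs_sub_le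
        (hGint _ _).integral_prod_right (hGint _ _).integral_prod_right fun y ↦ ?_
      simpa only [G, add_right_comm c] using
        abs_integral_comp_add_smul_sub_integral_le hF hC hμ hν (c + ∑ i, y i • w i.succ) (w 0)
    have hrest : |∫ z, G z ∂(ν.prod (Measure.pi fun _ ↦ μ))
        - ∫ z, G z ∂(ν.prod (Measure.pi fun _ ↦ ν))|
          ≤ ∑ i : Fin n, C * ‖w i.succ‖ ^ 3 / 2 * ((∫ x, |x| ^ 3 ∂μ) + ∫ x, |x| ^ 3 ∂ν) := by
      rw [integral_prod _ (hGint _ _), integral_prod _ (hGint _ _)]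
      exact abs_integral_sub_integral_le_of_forall_abs_sub_le
        (hGint _ _).integral_prod_left (hGint _ _).integral_prod_left
        fun t ↦ ih (c + t • w 0) (fun i ↦ w i.succ)
    rw [hG μ, hG ν, Fin.sum_univ_succ]
    exact (abs_sub_le _ _ _).trans (add_le_add hfirst hrest)

theorem abs_integral_pi_sub_integral_pi_le_of_norm_le (hF : ContDiff ℝ 3 F)
    (hFB : ∀ x, |F x| ≤ B) (hC : ∀ z, ‖iteratedFDeriv ℝ 3 F z‖ ≤ C) (hμ : HasStandardMoments μ)
    (hν : HasStandardMoments ν) {n : ℕ} (c : E) (w : Fin n → E) {ε : ℝ} (hw : ∀ i, ‖w i‖ ≤ ε) :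
    |∫ x, F (c + ∑ i, x i • w i) ∂(Measure.pi fun _ ↦ μ)
        - ∫ x, F (c + ∑ i, x i • w i) ∂(Measure.pi fun _ ↦ ν)|
      ≤ n * (C * ε ^ 3 / 2 * ((∫ x, |x| ^ 3 ∂μ) + ∫ x, |x| ^ 3 ∂ν)) := by
  have hC0 : 0 ≤ C := (norm_nonneg _).trans (hC 0)
  calc _ ≤ ∑ i, C * ‖w i‖ ^ 3 / 2 * ((∫ x, |x| ^ 3 ∂μ) + ∫ x, |x| ^ 3 ∂ν) :=
        abs_integral_pi_sub_integral_pi_le hF hFB hC hμ hν c w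
    _ ≤ ∑ _i : Fin n, C * ε ^ 3 / 2 * ((∫ x, |x| ^ 3 ∂μ) + ∫ x, |x| ^ 3 ∂ν) := by
        gcongr with i
        exact hw i
    _ = _ := by simp

end Lindeberg

-- `(√0)⁻¹ = 0`, so this also holds for `n = 0`.
theorem natCast_mul_inv_sqrt_pow_three (n : ℕ) : (n : ℝ) * (√n)⁻¹ ^ 3 = (√n)⁻¹ := by
  obtain h | h := eq_or_ne (√n) 0
  · simp [h]
  · nth_rewrite 1 [← Real.sq_sqrt (Nat.cast_nonneg n)]
    field_simp

/-- Lindeberg-exchange multivariate CLT bound: for `F : ℝ^p → ℝ` bounded with derivatives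
up to third order bounded by `C_F`, `ξ` a vector with i.i.d. coordinates of law `ν`
(mean zero, unit variance, finite third moment), `g` a standard Gaussian vector, and
`Σ ∈ {-1,+1}^{p×N}`,
`|E F(Σξ/√N) - E F(Σg/√N)| ≤ (p C_F/√N)(E|ξ₁|³ + E|g₁|³)`. -/
theorem lindeberg_clt_bound (p N : ℕ) (F : (Fin p → ℝ) → ℝ) (CF : ℝ)
    (hsmooth : ContDiff ℝ 3 F)
    (hFbdd : ∀ x, |F x| ≤ CF)
    (hderiv : ∀ (k : ℕ), k ≤ 3 → ∀ x, ‖iteratedFDeriv ℝ k F x‖ ≤ CF)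
    (ν : Measure ℝ) [IsProbabilityMeasure ν]
    (hmean : ∫ x, x ∂ν = 0) (hvar : ∫ x, x ^ 2 ∂ν = 1)
    (hthird : Integrable (fun x => |x| ^ 3) ν)
    (Sig : Fin p → Fin N → ℝ) (hSig : ∀ l i, Sig l i = 1 ∨ Sig l i = -1) :
    |(∫ x : Fin N → ℝ, F (fun l => (∑ i, Sig l i * x i) / Real.sqrt N)
          ∂(Measure.pi fun _ : Fin N => ν))
      - ∫ x : Fin N → ℝ, F (fun l => (∑ i, Sig l i * x i) / Real.sqrt N)
          ∂(Measure.pi fun _ : Fin N => gaussianReal 0 1)|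
      ≤ (p : ℝ) * CF / Real.sqrt N
          * ((∫ x, |x| ^ 3 ∂ν) + ∫ x, |x| ^ 3 ∂(gaussianReal 0 1)) := by
  obtain rfl | hp := p.eq_zero_or_pos
  · simp_rw [show ∀ x : Fin N → ℝ, (fun l : Fin 0 ↦ (∑ i, Sig l i * x i) / √N) = 0 from
      fun _ ↦ Subsingleton.elim _ _]
    simp
  set w : Fin N → Fin p → ℝ := fun i l ↦ Sig l i / √N
  have hw : ∀ i, ‖w i‖ ≤ (√N)⁻¹ := fun i ↦ (pi_norm_le_iff_of_nonneg (by positivity)).2 fun l ↦ by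
    rcases hSig l i with h | h <;> simp [w, h, abs_of_nonneg (Real.sqrt_nonneg _)]
  have hsum : ∀ x : Fin N → ℝ, (fun l ↦ (∑ i, Sig l i * x i) / √N) = 0 + ∑ i, x i • w i := by
    intro x
    ext l
    simp only [Pi.add_apply, Pi.zero_apply, zero_add, Finset.sum_apply, Pi.smul_apply, smul_eq_mul,
      w, Finset.sum_div]
    exact sum_congr rfl fun i _ ↦ by ring
  simp only [hsum]
  refine (abs_integral_pi_sub_integral_pi_le_of_norm_le hsmooth hFbdd (hderiv 3 le_rfl)
    ⟨hmean, hvar, hthird⟩ hasStandardMoments_gaussianReal 0 w hw).trans ?_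
  have hCF : 0 ≤ CF := (norm_nonneg _).trans (hderiv 3 le_rfl 0)
  have hp1 : (1 : ℝ) ≤ p := by exact_mod_cast hp
  set A := (∫ x, |x| ^ 3 ∂ν) + ∫ x, |x| ^ 3 ∂(gaussianReal 0 1)
  calc (N : ℝ) * (CF * (√N)⁻¹ ^ 3 / 2 * A) = CF * (√N)⁻¹ / 2 * A := by
        linear_combination CF / 2 * A * natCast_mul_inv_sqrt_pow_three N
    _ ≤ p * CF / √N * A := by
      rw [div_eq_mul_inv _ (√N)]
      gcongr
      nlinarith [mul_nonneg hCF (inv_nonneg.2 (Real.sqrt_nonneg N))]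
end
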